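/- Let x, y be generators of a grid diagram of size N and let D ∈ 𝒟(x,y). Then A(x) − A(y) = Σ_i (n_{X_i}(D) − n_{O_i}(D)). Moreover, if the grid diagram represents a knot, then A(x) is an integer for every generator x. -/

import Mathlib

/-- A generator of a grid diagram of size `N`: a permutation of `ℤ/N`. -/
abbrev GridGen (N : ℕ) := Equiv.Perm (ZMod N)

/-- The alternating corner sum of a 2-chain `D` at the lattice point `(a, b)`. -/
def cornerSum (N : ℕ) (D : ZMod N → ZMod N → ℤ) (a b : ZMod N) : ℤ :=
  D a b - D (a - 1) b - D a (b - 1) + D (a - 1) (b - 1)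

/-- `D` is a domain from the generator `x` to the generator `y`: the alternating
corner sum at a lattice point `p` is `1` if `p ∈ x \ y`, `-1` if `p ∈ y \ x`, and
`0` otherwise. -/
def IsGridDomain (N : ℕ) (x y : GridGen N) (D : ZMod N → ZMod N → ℤ) : Prop :=
  ∀ a b : ZMod N, cornerSum N D a b =
    if x a = b ∧ y a ≠ b then 1 else if y a = b ∧ x a ≠ b then -1 else 0

/-- The point measure `n_p(D)` at the lattice point `p = (a, b)`: the average of
the values of `D` on the four squares around `p`. -/
def gridNp (N : ℕ) (D : ZMod N → ZMod N → ℤ) (a b : ZMod N) : ℚ :=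
  ((D a b : ℚ) + (D (a - 1) b : ℚ) + (D a (b - 1) : ℚ) + (D (a - 1) (b - 1) : ℚ)) / 4

/-- The Maslov index `μ(D) = Σ_i (n_{(i, x i)}(D) + n_{(i, y i)}(D))`. -/
def maslovIndex (N : ℕ) [NeZero N] (x y : GridGen N) (D : ZMod N → ZMod N → ℤ) : ℚ :=
  ∑ i : ZMod N, (gridNp N D i (x i) + gridNp N D i (y i))
/-- `J(a, b) = 1/2` if `(a₁ - b₁)(a₂ - b₂) > 0` and `0` otherwise. -/
noncomputable def Jpt (p q : ℝ × ℝ) : ℚ :=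
  if 0 < (p.1 - q.1) * (p.2 - q.2) then 1 / 2 else 0

/-- The planar point corresponding to a coordinate `(i, b)` of a generator,
representing `ℤ/N` by `{0, 1, …, N-1} ⊂ ℝ`. -/
noncomputable def genPt (N : ℕ) (i b : ZMod N) : ℝ × ℝ :=
  ((ZMod.val i : ℝ), (ZMod.val b : ℝ))

/-- The planar point of the marking in column `i` determined by the permutation
`σ`: the centre `(i + 1/2, σ i + 1/2)` of the square `(i, σ i)`. -/
noncomputable def markPt (N : ℕ) (σ : GridGen N) (i : ZMod N) : ℝ × ℝ :=
  ((ZMod.val i : ℝ) + 1 / 2, (ZMod.val (σ i) : ℝ) + 1 / 2)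

/-- The absolute Maslov grading `M(x) = J(x - 𝕆, x - 𝕆) + 1`, with `J` extended
bilinearly to formal sums of points. -/
noncomputable def MaslovGrading (N : ℕ) [NeZero N] (σO : GridGen N) (x : GridGen N) : ℚ :=
  (∑ i : ZMod N, ∑ j : ZMod N,
      (Jpt (genPt N i (x i)) (genPt N j (x j)) - Jpt (genPt N i (x i)) (markPt N σO j) -
        Jpt (markPt N σO i) (genPt N j (x j)) + Jpt (markPt N σO i) (markPt N σO j))) + 1

/-- The absolute Alexander grading
`A(x) = J(x - (𝕏 + 𝕆)/2, 𝕏 - 𝕆) - (N - 1)/2`, with `J` extended bilinearly to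
formal sums of points. -/
noncomputable def AlexGrading (N : ℕ) [NeZero N] (σO σX : GridGen N) (x : GridGen N) : ℚ :=
  (∑ i : ZMod N, ∑ j : ZMod N,
      (Jpt (genPt N i (x i)) (markPt N σX j) - Jpt (genPt N i (x i)) (markPt N σO j) -
        (1 / 2) * Jpt (markPt N σX i) (markPt N σX j) +
        (1 / 2) * Jpt (markPt N σX i) (markPt N σO j) -
        (1 / 2) * Jpt (markPt N σO i) (markPt N σX j) +
        (1 / 2) * Jpt (markPt N σO i) (markPt N σO j))) - ((N : ℚ) - 1) / 2
/-- The grid diagram `(σO, σX)` represents a knot: `σX⁻¹ ∘ σO` is an `N`-cycle. -/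
def GridIsKnot (N : ℕ) [NeZero N] (σO σX : GridGen N) : Prop :=
  (σX⁻¹ * σO).IsCycle ∧ (σX⁻¹ * σO).support = Finset.univ


/-!
Write `#SW(w, a, b)` for the number of points of the generator `w` weakly south-west of the
lattice point `(a, b)`, and `c(σ)` for the number of pairs `i < j` with `σ i < σ j`. Evaluating
`J` point by point gives
`A(w) = Σ_j (#SW(w, X_j) - #SW(w, O_j)) + (c(σ_O) - c(σ_X) - (N - 1)) / 2`.

The function `#SW(x, ·) - #SW(y, ·)` has the same corner sums as every `D ∈ 𝒟(x, y)`, so the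
difference has vanishing corner sums and is therefore of the form `f a + g b`. Such a function
has the same total over the `X`-markings as over the `O`-markings, since both are graphs of
permutations; this is the relative formula.

For integrality, `sign σ = ε_N (-1)^c(σ)` with `ε_N` depending only on `N`, so
`(-1)^(c(σ_O) + c(σ_X)) = sign (σ_X⁻¹ σ_O)`, which is `(-1)^(N - 1)` when `σ_X⁻¹ σ_O` is an
`N`-cycle.
-/

open Finset

lemma ZMod.val_neg_one' (N : ℕ) [NeZero N] : (-1 : ZMod N).val = N - 1 := by
  obtain ⟨n, rfl⟩ := Nat.exists_eq_add_one_of_ne_zero (NeZero.ne N)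
  exact ZMod.val_neg_one n

lemma ZMod.val_sub_one_of_ne_zero {N : ℕ} [NeZero N] {a : ZMod N} (ha : a ≠ 0) :
    (a - 1).val = a.val - 1 := by
  have h1 : 1 ≤ a.val := Nat.one_le_iff_ne_zero.2 ((ZMod.val_ne_zero a).2 ha)
  have hcast : a - 1 = ((a.val - 1 : ℕ) : ZMod N) := by
    rw [Nat.cast_sub h1, ZMod.natCast_zmod_val, Nat.cast_one]
  rw [hcast, ZMod.val_cast_of_lt (by have := a.val_lt; omega)]

lemma ZMod.eq_apply_zero_of_apply_add_one {N : ℕ} [NeZero N] {α : Type*} {f : ZMod N → α}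
    (h : ∀ a, f (a + 1) = f a) (a : ZMod N) : f a = f 0 := by
  rw [← ZMod.natCast_zmod_val a]
  induction a.val with
  | zero => rw [Nat.cast_zero]
  | succ k ih => rw [Nat.cast_succ, h, ih]

lemma ite_val_le_sub_ite_val_le_sub_one {N : ℕ} [NeZero N] (i a : ZMod N) :
    ((if i.val ≤ a.val then 1 else 0 : ℤ) - if i.val ≤ (a - 1).val then 1 else 0) =
      (if i = a then 1 else 0) - if a = 0 then 1 else 0 := by
  have hi := i.val_lt
  simp only [← (ZMod.val_injective N).eq_iff (a := i)]
  by_cases ha : a = 0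
  · rw [ha, zero_sub, ZMod.val_neg_one', ZMod.val_zero, if_pos (by omega : i.val ≤ N - 1),
      if_pos rfl]
    split_ifs <;> omega
  · have := (ZMod.val_ne_zero a).2 ha
    rw [ZMod.val_sub_one_of_ne_zero ha, if_neg ha]
    split_ifs <;> omega

def concordantPairs {α : Type*} [Fintype α] (r : α → ℕ) (σ : Equiv.Perm α) : ℕ :=
  ∑ i, ∑ j, if r i < r j ∧ r (σ i) < r (σ j) then 1 else 0

theorem Equiv.Perm.sign_mul_sign_eq_neg_one_pow {n : ℕ} (σ τ : Perm (Fin n)) :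
    sign σ * sign τ = (-1) ^ (concordantPairs Fin.val σ + concordantPairs Fin.val τ) := by
  have hsign : ∀ π : Perm (Fin n),
      ∏ j, ∏ i ∈ Iio j, (if π i < π j then -1 else 1 : ℤˣ) = (-1) ^ concordantPairs Fin.val π := by
    intro π
    rw [concordantPairs, sum_comm, ← prod_pow_eq_pow_sum]
    refine prod_congr rfl fun j _ => ?_
    rw [← prod_pow_eq_pow_sum, ← filter_gt_eq_Iio, prod_filter]
    refine prod_congr rfl fun i _ => ?_
    simp only [← Fin.lt_def]
    split_ifs <;> simp_all
  rw [pow_add, ← hsign, ← hsign, sign_eq_prod_prod_Iio, sign_eq_prod_prod_Iio, ← prod_mul_distrib,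
    ← prod_mul_distrib]
  refine prod_congr rfl fun j _ => ?_
  rw [← prod_mul_distrib, ← prod_mul_distrib]
  refine prod_congr rfl fun i _ => ?_
  split_ifs <;> simp

lemma Jpt_comm (p q : ℝ × ℝ) : Jpt p q = Jpt q p := by
  simp only [Jpt, ← neg_sub q.1, ← neg_sub q.2, neg_mul_neg]

lemma Jpt_natCast_natCast_add_half (m p n q : ℕ) :
    Jpt ((m : ℝ), (p : ℝ)) ((n : ℝ) + 1 / 2, (q : ℝ) + 1 / 2) =
      if (m ≤ n ↔ p ≤ q) then 1 / 2 else 0 := by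
  have hprod : ((m : ℝ) - (n + 1 / 2)) * ((p : ℝ) - (q + 1 / 2)) =
      (((2 * m - 2 * n - 1) * (2 * p - 2 * q - 1) : ℤ) : ℝ) / 4 := by
    push_cast
    ring
  simp only [Jpt, hprod, div_pos_iff_of_pos_right (by norm_num : (0 : ℝ) < 4), Int.cast_pos,
    mul_pos_iff]
  congr 1
  exact propext (by omega)

lemma Jpt_add_half_add_half (m p n q : ℕ) :
    Jpt ((m : ℝ) + 1 / 2, (p : ℝ) + 1 / 2) ((n : ℝ) + 1 / 2, (q : ℝ) + 1 / 2) =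
      ((if m < n ∧ p < q then 1 else 0) + if n < m ∧ q < p then 1 else 0) / 2 := by
  have hprod : ((m : ℝ) + 1 / 2 - (n + 1 / 2)) * ((p : ℝ) + 1 / 2 - (q + 1 / 2)) =
      (((m - n) * (p - q) : ℤ) : ℝ) := by
    push_cast
    ring
  simp only [Jpt, hprod, Int.cast_pos, mul_pos_iff]
  split_ifs <;> first | omega | norm_num

lemma cornerSum_sub {N : ℕ} (D E : ZMod N → ZMod N → ℤ) (a b : ZMod N) :
    cornerSum N (D - E) a b = cornerSum N D a b - cornerSum N E a b := by
  simp only [cornerSum, Pi.sub_apply]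
  ring

lemma IsGridDomain.cornerSum_eq {N : ℕ} {x y : GridGen N} {D : ZMod N → ZMod N → ℤ}
    (hD : IsGridDomain N x y D) (a b : ZMod N) :
    cornerSum N D a b = (if x a = b then 1 else 0) - if y a = b then 1 else 0 := by
  rw [hD a b]
  split_ifs <;> simp_all

section

variable {N : ℕ} [NeZero N]

def countSW (w : GridGen N) (a b : ZMod N) : ℤ :=
  ∑ i, if i.val ≤ a.val ∧ (w i).val ≤ b.val then 1 else 0

lemma cornerSum_countSW (w : GridGen N) (a b : ZMod N) :
    cornerSum N (countSW w) a b =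
      (if w a = b then 1 else 0) - (if a = 0 then 1 else 0) - (if b = 0 then 1 else 0) +
        if a = 0 ∧ b = 0 then (N : ℤ) else 0 := by
  have hfactor : cornerSum N (countSW w) a b = ∑ i,
      ((if i.val ≤ a.val then 1 else 0 : ℤ) - if i.val ≤ (a - 1).val then 1 else 0) *
        ((if (w i).val ≤ b.val then 1 else 0 : ℤ) - if (w i).val ≤ (b - 1).val then 1 else 0) := by
    simp only [cornerSum, countSW, ← sum_sub_distrib, ← sum_add_distrib]
    refine sum_congr rfl fun i _ => ?_
    split_ifs <;> omega
  have hrow : ∑ i, (if w i = b then 1 else 0 : ℤ) = 1 := by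
    rw [Equiv.sum_comp w (fun c => if c = b then (1 : ℤ) else 0), sum_ite_eq' univ b,
      if_pos (mem_univ b)]
  rw [hfactor]
  simp only [ite_val_le_sub_ite_val_le_sub_one, sub_mul, mul_sub, sum_sub_distrib, ite_mul,
    one_mul, zero_mul, sum_ite_eq', mem_univ, if_true, sum_const, card_univ, ZMod.card,
    nsmul_eq_mul]
  split_ifs <;> simp_all <;> ring

lemma eq_add_of_cornerSum_eq_zero {E : ZMod N → ZMod N → ℤ} (hE : ∀ a b, cornerSum N E a b = 0)
    (a b : ZMod N) : E a b = E a 0 + E 0 b - E 0 0 := by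
  have hcol : ∀ a b, E a b - E a (b - 1) = E 0 b - E 0 (b - 1) := fun a b =>
    ZMod.eq_apply_zero_of_apply_add_one (f := fun a => E a b - E a (b - 1)) (fun a => by
      have := hE (a + 1) b
      simp only [cornerSum, add_sub_cancel_right] at this
      linarith) a
  have hrow := ZMod.eq_apply_zero_of_apply_add_one (f := fun b => E a b - E 0 b) (fun b => by
    have := hcol a (b + 1)
    simp only [add_sub_cancel_right] at this
    linarith) b
  linarith

lemma sum_sub_eq_zero_of_cornerSum_eq_zero {E : ZMod N → ZMod N → ℤ}
    (hE : ∀ a b, cornerSum N E a b = 0) (σ τ : GridGen N) :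
    ∑ i, (E i (σ i) - E i (τ i)) = 0 := by
  have hcancel : ∀ i, E i (σ i) - E i (τ i) = E 0 (σ i) - E 0 (τ i) := fun i => by
    rw [eq_add_of_cornerSum_eq_zero hE i (σ i), eq_add_of_cornerSum_eq_zero hE i (τ i)]
    ring
  rw [sum_congr rfl fun i _ => hcancel i, sum_sub_distrib, Equiv.sum_comp σ (E 0),
    Equiv.sum_comp τ (E 0), sub_self]

lemma IsGridDomain.sum_sub_eq {x y : GridGen N} {D : ZMod N → ZMod N → ℤ}
    (hD : IsGridDomain N x y D) (σ τ : GridGen N) :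
    ∑ i, (D i (σ i) - D i (τ i)) =
      ∑ i, (countSW x i (σ i) - countSW x i (τ i)) -
        ∑ i, (countSW y i (σ i) - countSW y i (τ i)) := by
  have hE : ∀ a b, cornerSum N (D - (countSW x - countSW y)) a b = 0 := fun a b => by
    rw [cornerSum_sub, cornerSum_sub, hD.cornerSum_eq, cornerSum_countSW, cornerSum_countSW]
    ring
  rw [← sub_eq_zero, ← sum_sub_distrib, ← sum_sub_distrib,
    ← sum_sub_eq_zero_of_cornerSum_eq_zero hE σ τ]
  refine sum_congr rfl fun i _ => ?_
  simp only [Pi.sub_apply]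
  ring

lemma sum_sum_ite_val_le :
    ∑ i : ZMod N, ∑ j : ZMod N, (if i.val ≤ j.val then 1 else 0 : ℚ) = (N ^ 2 + N) / 2 := by
  have hpair : ∀ i j : ZMod N, (if i.val ≤ j.val then 1 else 0 : ℚ) +
      (if j.val ≤ i.val then 1 else 0) = 1 + if i = j then 1 else 0 := fun i j => by
    simp only [← (ZMod.val_injective N).eq_iff (a := i)]
    split_ifs <;> first | omega | norm_num
  have hdouble := congrArg (fun f : ZMod N → ZMod N → ℚ => ∑ i, ∑ j, f i j) (funext₂ hpair)
  simp only [sum_add_distrib, sum_ite_eq, mem_univ, if_true, sum_const, card_univ, ZMod.card,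
    nsmul_eq_mul, mul_one] at hdouble
  rw [sum_comm (f := fun i j : ZMod N => if j.val ≤ i.val then (1 : ℚ) else 0)] at hdouble
  linarith

lemma sum_sum_Jpt_genPt_markPt (w σ : GridGen N) :
    ∑ i, ∑ j, Jpt (genPt N i (w i)) (markPt N σ j) = ∑ j, (countSW w j (σ j) : ℚ) - N / 2 := by
  have hpt : ∀ i j, Jpt (genPt N i (w i)) (markPt N σ j) =
      (if i.val ≤ j.val ∧ (w i).val ≤ (σ j).val then 1 else 0) + 1 / 2 -
        (if i.val ≤ j.val then 1 else 0) / 2 - (if (w i).val ≤ (σ j).val then 1 else 0) / 2 :=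
    fun i j => by
      rw [genPt, markPt, Jpt_natCast_natCast_add_half]
      split_ifs <;> first | omega | norm_num
  have hperm : ∑ i, ∑ j, (if (w i).val ≤ (σ j).val then 1 else 0 : ℚ) =
      ∑ i : ZMod N, ∑ j : ZMod N, if i.val ≤ j.val then 1 else 0 := by
    rw [Equiv.sum_comp w (fun a => ∑ j, if a.val ≤ (σ j).val then (1 : ℚ) else 0)]
    exact sum_congr rfl fun a _ => Equiv.sum_comp σ (fun b => if a.val ≤ b.val then (1 : ℚ) else 0)
  simp only [hpt, sum_add_distrib, sum_sub_distrib, ← sum_div, hperm, sum_sum_ite_val_le,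
    sum_const, card_univ, ZMod.card, nsmul_eq_mul]
  rw [sum_comm]
  simp only [countSW, Int.cast_sum, Int.cast_ite, Int.cast_one, Int.cast_zero]
  ring

lemma sum_sum_Jpt_markPt_markPt (σ : GridGen N) :
    ∑ i, ∑ j, Jpt (markPt N σ i) (markPt N σ j) = concordantPairs ZMod.val σ := by
  simp only [markPt, Jpt_add_half_add_half, ← sum_div, sum_add_distrib]
  rw [sum_comm (f := fun i j : ZMod N => if j.val < i.val ∧ (σ j).val < (σ i).val
    then (1 : ℚ) else 0)]
  simp only [concordantPairs, Nat.cast_sum, Nat.cast_ite, Nat.cast_one, Nat.cast_zero]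
  ring

lemma alexGrading_eq (σO σX w : GridGen N) :
    AlexGrading N σO σX w = ∑ j, ((countSW w j (σX j) : ℚ) - countSW w j (σO j)) +
      ((concordantPairs ZMod.val σO : ℚ) - concordantPairs ZMod.val σX - (N - 1)) / 2 := by
  have hcross : ∑ i, ∑ j, Jpt (markPt N σX i) (markPt N σO j) =
      ∑ i, ∑ j, Jpt (markPt N σO i) (markPt N σX j) := by
    rw [sum_comm]
    exact sum_congr rfl fun i _ => sum_congr rfl fun j _ => Jpt_comm _ _
  simp only [AlexGrading, sum_add_distrib, sum_sub_distrib, ← mul_sum, sum_sum_Jpt_genPt_markPt,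
    sum_sum_Jpt_markPt_markPt, hcross]
  ring

lemma GridIsKnot.odd_concordantPairs_add {N : ℕ} [NeZero N] {σO σX : GridGen N}
    (hk : GridIsKnot N σO σX) :
    Odd (concordantPairs ZMod.val σO + concordantPairs ZMod.val σX + N) := by
  obtain ⟨n, rfl⟩ := Nat.exists_eq_add_one_of_ne_zero (NeZero.ne N)
  -- `ZMod (n + 1)` is `Fin (n + 1)` by definition, and `ZMod.val` is `Fin.val`.
  have hsign : (-1 : ℤˣ) ^ (concordantPairs ZMod.val σX + concordantPairs ZMod.val σO) =
      -(-1) ^ (n + 1) :=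
    calc _ = Equiv.Perm.sign σX * Equiv.Perm.sign σO :=
          (Equiv.Perm.sign_mul_sign_eq_neg_one_pow (n := n + 1) σX σO).symm
      _ = -(-1) ^ (n + 1) := by
          rw [← Equiv.Perm.sign_inv σX, ← Equiv.Perm.sign_mul, hk.1.sign, hk.2, card_univ,
            ZMod.card]
  rw [← neg_one_pow_eq_neg_one_iff_odd (R := ℤˣ) (by decide), pow_add,
    add_comm (concordantPairs _ σO), hsign, neg_mul, Int.units_mul_self]

end

theorem absolute_refines_relative_alexander_general (N : ℕ) [NeZero N]
    (σO σX : GridGen N)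
    (x y : GridGen N) (D : ZMod N → ZMod N → ℤ) (hD : IsGridDomain N x y D) :
    (AlexGrading N σO σX x - AlexGrading N σO σX y =
        ∑ i : ZMod N, ((D i (σX i) : ℚ) - (D i (σO i) : ℚ))) ∧
      (GridIsKnot N σO σX → ∀ w : GridGen N, ∃ m : ℤ, AlexGrading N σO σX w = (m : ℚ)) := by
  refine ⟨?_, fun hknot w => ?_⟩
  · have hsum := congrArg (Int.cast : ℤ → ℚ) (hD.sum_sub_eq σX σO)
    push_cast at hsum
    rw [alexGrading_eq, alexGrading_eq, hsum]
    ring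
  · obtain ⟨t, ht⟩ := hknot.odd_concordantPairs_add
    refine ⟨∑ j, (countSW w j (σX j) - countSW w j (σO j)) +
      (t + 1 - concordantPairs ZMod.val σX - N), ?_⟩
    have ht' : (concordantPairs ZMod.val σO : ℚ) + concordantPairs ZMod.val σX + N = 2 * t + 1 := by
      exact_mod_cast ht
    rw [alexGrading_eq]
    push_cast
    linarith

/-- For generators `x, y` and any `D ∈ 𝒟(x,y)`,
`A(x) − A(y) = Σᵢ (n_{Xᵢ}(D) − n_{Oᵢ}(D))`; moreover if the grid diagram
represents a knot then `A` takes integer values on every generator. -/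
theorem absolute_refines_relative_alexander (N : ℕ) [NeZero N] (hN : 2 ≤ N)
    (σO σX : GridGen N) (hσ : ∀ i : ZMod N, σO i ≠ σX i)
    (x y : GridGen N) (D : ZMod N → ZMod N → ℤ) (hD : IsGridDomain N x y D) :
    (AlexGrading N σO σX x - AlexGrading N σO σX y =
        ∑ i : ZMod N, ((D i (σX i) : ℚ) - (D i (σO i) : ℚ))) ∧
      (GridIsKnot N σO σX → ∀ w : GridGen N, ∃ m : ℤ, AlexGrading N σO σX w = (m : ℚ)) :=
  absolute_refines_relative_alexander_general N σO σX x y D hD
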